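/- Let 0 < λ < ‖K̂‖_∞^{−1}, let u be a bounded measurable 2π-periodic function, and let μ_u be the probability measure on [0,2π] with density e^{−u(θ)} / ∫₀^{2π} e^{−u}. If v is a bounded measurable 2π-periodic function satisfying, for every θ, v(θ) = λ [ ∫₀^{2π} v dμ_u · ∫₀^{2π} K̂(θ − θ') dμ_u(θ') − ∫₀^{2π} K̂(θ − θ') v(θ') dμ_u(θ') ], then v ≡ 0. -/

import Mathlib

/-!
Let `c` be the `μ_u`-mean of `v` and `D = ∫ |v - c| dμ_u`. Since `∫ (v - c) dμ_u = 0`, the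
equation reads `v(θ) = -λ ∫ K̂(θ - t) (v(t) - c) dμ_u(t)`, so `|v| ≤ R := λ ‖K̂‖_∞ D` everywhere.
A function with values in `[-R, R]` deviates from its mean by at most `R` on average, hence
`D ≤ λ ‖K̂‖_∞ D`; as `λ ‖K̂‖_∞ < 1` this forces `D = 0`, and then `v = 0`.
-/

open MeasureTheory Filter Topology Real intervalIntegral

/-- `Γ[u](θ) = (∫₀^{2π} e^{-u})⁻¹ ∫₀^{2π} K̂(θ - θ') e^{-u(θ')} dθ'`. -/
noncomputable def Gam (K u : ℝ → ℝ) (θ : ℝ) : ℝ :=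
  (∫ t in (0:ℝ)..(2 * π), Real.exp (-(u t)))⁻¹ *
    ∫ t in (0:ℝ)..(2 * π), K (θ - t) * Real.exp (-(u t))

/-- Membership in `X = {u ∈ L²([0,2π]) : u(θ) = u(θ+π) a.e., u(θ) = u(2π-θ) a.e.,
∫₀^{2π} u = 0}`, for a (2π-periodic) representative `u : ℝ → ℝ`. -/
def MemX (u : ℝ → ℝ) : Prop :=
  MemLp u 2 (volume.restrict (Set.Ioc (0:ℝ) (2 * π))) ∧
  (∀ᵐ θ : ℝ, u (θ + π) = u θ) ∧
  (∀ᵐ θ : ℝ, u (2 * π - θ) = u θ) ∧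
  (∫ θ in (0:ℝ)..(2 * π), u θ) = 0

/-- `‖K̂‖_∞ = sup_{θ ∈ [0,2π]} |K̂(θ)|`. -/
noncomputable def supNorm (K : ℝ → ℝ) : ℝ := ⨆ θ : Set.Icc (0:ℝ) (2 * π), |K θ|

/-- The mean `∫₀^{2π} f dμ_u` of `f` against the probability measure `μ_u` with
density `e^{-u}/∫₀^{2π} e^{-u}`. -/
noncomputable def mAvg (u f : ℝ → ℝ) : ℝ :=
  (∫ t in (0:ℝ)..(2 * π), Real.exp (-(u t)))⁻¹ *
    ∫ t in (0:ℝ)..(2 * π), f t * Real.exp (-(u t))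

section

variable {α : Type*} [MeasurableSpace α] {μ : Measure α}

theorem integral_abs_sub_integral_le [IsProbabilityMeasure μ] {g : α → ℝ} {a b : ℝ}
    (hg : Integrable g μ) (hgab : ∀ᵐ x ∂μ, g x ∈ Set.Icc a b) :
    ∫ x, |g x - ∫ y, g y ∂μ| ∂μ ≤ (b - a) / 2 := by
  set c := ∫ y, g y ∂μ
  have hac : a ≤ c := by
    simpa using integral_mono_ae (integrable_const a) hg (hgab.mono fun x hx => hx.1)
  have hcb : c ≤ b := by
    simpa using integral_mono_ae hg (integrable_const b) (hgab.mono fun x hx => hx.2)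
  have hdev : Integrable (fun x => |g x - c|) μ := (hg.sub (integrable_const c)).abs
  have hdev_le : ∫ x, |g x - c| ∂μ ≤ b - a := by
    simpa using integral_mono_ae hdev (integrable_const (b - a)) <| hgab.mono fun x hx => by
      rw [abs_le]; constructor <;> linarith [hx.1, hx.2]
  -- `|· - c|` is convex, so on `[a, b]` it lies below its chord.
  have hchord : ∀ᵐ x ∂μ, (b - a) * |g x - c| ≤ (b - a) * (c - a) + (g x - a) * (b + a - 2 * c) :=
    hgab.mono fun x hx => by
      rcases abs_cases (g x - c) with ⟨h, _⟩ | ⟨h, _⟩ <;> rw [h] <;> nlinarith [hx.1, hx.2]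
  have hga : Integrable (fun x => g x - a) μ := hg.sub (integrable_const a)
  have hint : ∫ x, (b - a) * |g x - c| ∂μ
      ≤ ∫ x, ((b - a) * (c - a) + (g x - a) * (b + a - 2 * c)) ∂μ :=
    integral_mono_ae (hdev.const_mul _)
      ((integrable_const _).add (hga.mul_const _)) hchord
  rw [MeasureTheory.integral_const_mul, integral_add (integrable_const _) (hga.mul_const _),
    MeasureTheory.integral_const, MeasureTheory.integral_mul_const,
    integral_sub hg (integrable_const a), MeasureTheory.integral_const] at hint
  simp only [probReal_univ, one_smul] at hint
  have hdev_nonneg : 0 ≤ ∫ x, |g x - c| ∂μ := integral_nonneg fun x => abs_nonneg _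
  nlinarith [sq_nonneg (b + a - 2 * c)]

-- The right-hand side is `-lam` times the `μ`-covariance of `k θ` and `v`.
theorem eq_zero_of_forall_eq_neg_mul_covariance [IsProbabilityMeasure μ] {k : α → α → ℝ}
    {κ lam : ℝ} (hk : ∀ θ, AEStronglyMeasurable (k θ) μ) (hkκ : ∀ θ t, |k θ t| ≤ κ)
    (hlam : |lam| * κ < 1) {v : α → ℝ} (hv : Integrable v μ)
    (heq : ∀ θ, v θ = lam * ((∫ t, v t ∂μ) * (∫ t, k θ t ∂μ) - ∫ t, k θ t * v t ∂μ)) :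
    v = 0 := by
  set c := ∫ t, v t ∂μ
  set D := ∫ t, |v t - c| ∂μ
  have hkint : ∀ θ, Integrable (k θ) μ := fun θ =>
    .of_bound (hk θ) κ (ae_of_all _ fun t => hkκ θ t)
  have hrepr : ∀ θ, v θ = -lam * ∫ t, k θ t * (v t - c) ∂μ := fun θ => by
    have hkv : Integrable (fun t => k θ t * v t) μ :=
      hv.bdd_mul (hk θ) (ae_of_all _ fun t => hkκ θ t)
    simp_rw [mul_sub]
    rw [heq θ, integral_sub hkv ((hkint θ).mul_const c), MeasureTheory.integral_mul_const]
    ring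
  have hbound : ∀ θ, |v θ| ≤ |lam| * κ * D := fun θ => by
    rw [hrepr θ, abs_mul, abs_neg, mul_assoc, ← MeasureTheory.integral_const_mul]
    gcongr
    have hdev : Integrable (fun t => |v t - c|) μ := (hv.sub (integrable_const c)).abs
    rw [← Real.norm_eq_abs]
    refine norm_integral_le_of_norm_le (hdev.const_mul κ) (ae_of_all _ fun t => ?_)
    rw [Real.norm_eq_abs, abs_mul]
    exact mul_le_mul_of_nonneg_right (hkκ θ t) (abs_nonneg _)
  have hD : D ≤ |lam| * κ * D := by
    simpa using integral_abs_sub_integral_le hv (ae_of_all _ fun θ => abs_le.mp (hbound θ))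
  have hD0 : D = 0 := by
    have : 0 ≤ D := integral_nonneg fun t => abs_nonneg _
    nlinarith
  funext θ
  simpa [hD0] using hbound θ

end

theorem abs_le_supNorm {K : ℝ → ℝ} (hKcont : Continuous K) (hKper : Function.Periodic K (2 * π))
    (x : ℝ) : |K x| ≤ supNorm K := by
  obtain ⟨y, hy, hxy⟩ := hKper.exists_mem_Ico₀ (by positivity) x
  rw [hxy]
  have hbdd : BddAbove (Set.range fun θ : Set.Icc (0:ℝ) (2 * π) => |K θ|) := by
    simpa only [Set.image_eq_range] using (isCompact_Icc.image hKcont.abs).bddAbove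
  exact le_ciSup hbdd ⟨y, Set.Ico_subset_Icc_self hy⟩

theorem mAvg_eq_integral_tilted (u f : ℝ → ℝ) :
    mAvg u f = ∫ t, f t ∂(volume.restrict (Set.Ioc 0 (2 * π))).tilted (fun t => -u t) := by
  rw [integral_tilted, mAvg, integral_of_le (by positivity), integral_of_le (by positivity),
    ← MeasureTheory.integral_const_mul]
  congr 1 with t
  rw [smul_eq_mul]
  ring

theorem isProbabilityMeasure_tilted_Ioc {u : ℝ → ℝ} (hu : Measurable u)
    (hubd : ∃ M : ℝ, ∀ θ, |u θ| ≤ M) :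
    IsProbabilityMeasure ((volume.restrict (Set.Ioc 0 (2 * π))).tilted (fun t => -u t)) := by
  obtain ⟨M, hM⟩ := hubd
  have : NeZero (volume.restrict (Set.Ioc 0 (2 * π))) := ⟨by simp [pi_pos]⟩
  refine isProbabilityMeasure_tilted (.of_bound hu.neg.exp.aestronglyMeasurable (Real.exp M)
    (ae_of_all _ fun t => ?_))
  rw [Real.norm_eq_abs, abs_of_pos (Real.exp_pos _), Real.exp_le_exp]
  exact (neg_le_abs (u t)).trans (hM t)

theorem kernel_trivial_general (K : ℝ → ℝ) (hKcont : Continuous K)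
    (hKper : Function.Periodic K (2 * π))
    (lam : ℝ) (hlam0 : 0 < lam) (hlam : lam < (supNorm K)⁻¹)
    (u : ℝ → ℝ) (hu : Measurable u)
    (hubd : ∃ M : ℝ, ∀ θ, |u θ| ≤ M)
    (v : ℝ → ℝ) (hv : Measurable v)
    (hvbd : ∃ M : ℝ, ∀ θ, |v θ| ≤ M)
    (heq : ∀ θ : ℝ, v θ = lam *
      (mAvg u v * mAvg u (fun t => K (θ - t)) - mAvg u (fun t => K (θ - t) * v t))) :
    ∀ θ : ℝ, v θ = 0 := by
  have := isProbabilityMeasure_tilted_Ioc hu hubd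
  have hlamK : |lam| * supNorm K < 1 := by
    rw [abs_of_pos hlam0]
    rcases (abs_nonneg (K 0)).trans (abs_le_supNorm hKcont hKper 0) |>.eq_or_lt with hK | hK
    · simp [← hK]
    · exact (lt_inv_mul_iff₀' hK).mp (by simpa using hlam)
  obtain ⟨M, hM⟩ := hvbd
  refine congrFun (eq_zero_of_forall_eq_neg_mul_covariance
    (μ := (volume.restrict (Set.Ioc 0 (2 * π))).tilted (fun t => -u t))
    (k := fun θ t => K (θ - t))
    (fun θ => (hKcont.comp (continuous_sub_left θ)).aestronglyMeasurable)
    (fun θ t => abs_le_supNorm hKcont hKper (θ - t)) hlamK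
    (.of_bound hv.aestronglyMeasurable M (ae_of_all _ hM)) ?_)
  simpa only [mAvg_eq_integral_tilted] using heq

/-- If `0 < λ < ‖K̂‖_∞⁻¹` and the bounded measurable `2π`-periodic `v` satisfies
`v = λ DΓ[u](v)` pointwise, then `v ≡ 0`. -/
theorem kernel_trivial (K : ℝ → ℝ) (hKcont : Continuous K)
    (hKper : Function.Periodic K (2 * π))
    (lam : ℝ) (hlam0 : 0 < lam) (hlam : lam < (supNorm K)⁻¹)
    (u : ℝ → ℝ) (hu : Measurable u) (huper : Function.Periodic u (2 * π))
    (hubd : ∃ M : ℝ, ∀ θ, |u θ| ≤ M)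
    (v : ℝ → ℝ) (hv : Measurable v) (hvper : Function.Periodic v (2 * π))
    (hvbd : ∃ M : ℝ, ∀ θ, |v θ| ≤ M)
    (heq : ∀ θ : ℝ, v θ = lam *
      (mAvg u v * mAvg u (fun t => K (θ - t)) - mAvg u (fun t => K (θ - t) * v t))) :
    ∀ θ : ℝ, v θ = 0 :=
  kernel_trivial_general K hKcont hKper lam hlam0 hlam u hu hubd v hv hvbd heq
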